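/- For each integer p ≥ 3 and each integer k ≥ 0, the equation Θ_{k,p}(-E) = 0 has a unique solution E = E_k(p) in (E_∞, ∞), where E_∞ = 2√((p-1)/p); moreover the sequence (E_k(p))_{k≥0} is strictly decreasing in k and converges to E_∞(p) as k → ∞. -/

import Mathlib

open Real Set Filter

noncomputable def Einf (p : ℕ) : ℝ := 2 * Real.sqrt ((p - 1) / p)

noncomputable def rateI1 (p : ℕ) (u : ℝ) : ℝ :=
  -(u / (Einf p) ^ 2) * Real.sqrt (u ^ 2 - (Einf p) ^ 2)
    - Real.log (-u + Real.sqrt (u ^ 2 - (Einf p) ^ 2)) + Real.log (Einf p)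

noncomputable def ThetaK (p k : ℕ) (u : ℝ) : ℝ :=
  if u ≤ -(Einf p) then
    (1 / 2) * Real.log (p - 1) - ((p - 2) / (4 * (p - 1))) * u ^ 2 - (k + 1) * rateI1 p u
  else (1 / 2) * Real.log (p - 1) - (p - 2) / p

noncomputable def Jf (e E : ℝ) : ℝ :=
  E / e ^ 2 * Real.sqrt (E ^ 2 - e ^ 2) - Real.log (E + Real.sqrt (E ^ 2 - e ^ 2)) + Real.log e

lemma Jf_self (e : ℝ) : Jf e e = 0 := by simp [Jf]

lemma Jf_contOn {e : ℝ} (he : 0 < e) : ContinuousOn (Jf e) (Ici e) := by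
  have hs : Continuous fun E : ℝ => Real.sqrt (E ^ 2 - e ^ 2) :=
    ((continuous_pow 2).sub continuous_const).sqrt
  apply ContinuousOn.add
  · apply ContinuousOn.sub
    · exact ((continuous_id.div_const _).mul hs).continuousOn
    · apply ContinuousOn.log
      · exact (continuous_id.add hs).continuousOn
      · intro x hx
        have hx0 : 0 < x := he.trans_le hx
        have := Real.sqrt_nonneg (x ^ 2 - e ^ 2)
        positivity
  · exact continuousOn_const

lemma Jf_hasDerivAt {e E : ℝ} (he : 0 < e) (hE : e < E) :
    HasDerivAt (Jf e) (2 * Real.sqrt (E ^ 2 - e ^ 2) / e ^ 2) E := by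
  have hE0 : 0 < E := he.trans hE
  have hx : 0 < E ^ 2 - e ^ 2 := by nlinarith
  set s := Real.sqrt (E ^ 2 - e ^ 2) with hsdef
  have hs0 : 0 < s := Real.sqrt_pos.mpr hx
  have hs2 : s ^ 2 = E ^ 2 - e ^ 2 := Real.sq_sqrt hx.le
  have h1 : HasDerivAt (fun x : ℝ => x ^ 2 - e ^ 2) (2 * E) E := by
    simpa using (hasDerivAt_pow 2 E).sub_const (e ^ 2)
  have hsqrt : HasDerivAt (fun x : ℝ => Real.sqrt (x ^ 2 - e ^ 2)) (E / s) E := by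
    have h2 := (Real.hasDerivAt_sqrt hx.ne').comp E h1
    refine h2.congr_deriv (Eq.symm ?_)
    field_simp
    ring
  have hterm1 : HasDerivAt (fun x : ℝ => x / e ^ 2 * Real.sqrt (x ^ 2 - e ^ 2))
      (1 / e ^ 2 * s + E / e ^ 2 * (E / s)) E :=
    ((hasDerivAt_id E).div_const (e ^ 2)).mul hsqrt
  have hterm2 : HasDerivAt (fun x : ℝ => Real.log (x + Real.sqrt (x ^ 2 - e ^ 2)))
      ((1 + E / s) / (E + s)) E := by
    have hadd : HasDerivAt (fun x : ℝ => x + Real.sqrt (x ^ 2 - e ^ 2)) (1 + E / s) E :=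
      (hasDerivAt_id E).add hsqrt
    exact hadd.log (by positivity)
  have hsum := (hterm1.sub hterm2).add_const (Real.log e)
  refine hsum.congr_deriv (Eq.symm ?_)
  have hes : E + s ≠ 0 := by positivity
  have h3 : (1 + E / s) / (E + s) = 1 / s := by
    rw [div_eq_div_iff hes hs0.ne']
    field_simp
    ring
  rw [h3]
  field_simp
  linear_combination hs2

lemma Jf_strictMonoOn {e : ℝ} (he : 0 < e) : StrictMonoOn (Jf e) (Ici e) := by
  apply strictMonoOn_of_deriv_pos (convex_Ici e) (Jf_contOn he)
  intro x hx
  rw [interior_Ici] at hx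
  rw [(Jf_hasDerivAt he hx).deriv]
  have hex : e < x := hx
  have hx0 : 0 < x := he.trans hex
  have hx2 : 0 < x ^ 2 - e ^ 2 := by nlinarith
  have := Real.sqrt_pos.mpr hx2
  positivity

lemma Jf_lower {e E : ℝ} (he : 0 < e) (hE : e ≤ E) :
    Real.log e - 2 * E ≤ Jf e E := by
  have hE0 : 0 < E := he.trans_le hE
  have hs0 : 0 ≤ Real.sqrt (E ^ 2 - e ^ 2) := Real.sqrt_nonneg _
  have hsle : Real.sqrt (E ^ 2 - e ^ 2) ≤ E := by
    calc Real.sqrt (E ^ 2 - e ^ 2) ≤ Real.sqrt (E ^ 2) :=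
          Real.sqrt_le_sqrt (by nlinarith)
      _ = E := by rw [Real.sqrt_sq hE0.le]
  have hlog1 : Real.log (E + Real.sqrt (E ^ 2 - e ^ 2)) ≤ Real.log (2 * E) :=
    Real.log_le_log (by positivity) (by linarith)
  have hlog2 : Real.log (2 * E) ≤ 2 * E - 1 := Real.log_le_sub_one_of_pos (by positivity)
  have ht1 : 0 ≤ E / e ^ 2 * Real.sqrt (E ^ 2 - e ^ 2) := by positivity
  unfold Jf
  linarith

lemma F_strictAntiOn {e A c : ℝ} (he : 0 < e) (hA : 0 < A) (hc : 0 < c) (C : ℝ) :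
    StrictAntiOn (fun E => C - A * E ^ 2 - c * Jf e E) (Ici e) := by
  intro x hx y hy hxy
  have h1 : Jf e x < Jf e y := Jf_strictMonoOn he hx hy hxy
  have hx0 : 0 < x := he.trans_le hx
  have h2 : x ^ 2 < y ^ 2 := by nlinarith
  simp only
  nlinarith

lemma theta_pos {p : ℕ} (hp : 3 ≤ p) :
    0 < (1 / 2 : ℝ) * Real.log ((p : ℝ) - 1) - ((p : ℝ) - 2) / p := by
  have hp3 : (3 : ℝ) ≤ p := by exact_mod_cast hp
  have hl2 := Real.log_two_gt_d9
  have hl3 : (1 : ℝ) < Real.log 3 := by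
    rw [Real.lt_log_iff_exp_lt (by norm_num)]
    exact lt_trans Real.exp_one_lt_d9 (by norm_num)
  rcases le_or_gt p 8 with h8 | h8
  · interval_cases p
    · norm_num
      nlinarith
    · norm_num
      nlinarith
    · have h4 : Real.log 4 = 2 * Real.log 2 := by
        rw [show (4 : ℝ) = 2 ^ 2 by norm_num, Real.log_pow]; push_cast; ring
      norm_num
      nlinarith
    · have h5 : Real.log 4 ≤ Real.log 5 := Real.log_le_log (by norm_num) (by norm_num)
      have h4 : Real.log 4 = 2 * Real.log 2 := by
        rw [show (4 : ℝ) = 2 ^ 2 by norm_num, Real.log_pow]; push_cast; ring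
      norm_num
      nlinarith
    · have h6 : Real.log 6 = Real.log 2 + Real.log 3 := by
        rw [show (6 : ℝ) = 2 * 3 by norm_num, Real.log_mul (by norm_num) (by norm_num)]
      norm_num
      nlinarith
    · have h6 : Real.log 6 = Real.log 2 + Real.log 3 := by
        rw [show (6 : ℝ) = 2 * 3 by norm_num, Real.log_mul (by norm_num) (by norm_num)]
      have h7 : Real.log 6 ≤ Real.log 7 := Real.log_le_log (by norm_num) (by norm_num)
      norm_num
      nlinarith
  · have h8' : (8 : ℝ) ≤ (p : ℝ) - 1 := by
      have : (9 : ℝ) ≤ p := by exact_mod_cast h8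
      linarith
    have hl8 : Real.log 8 = 3 * Real.log 2 := by
      rw [show (8 : ℝ) = 2 ^ 3 by norm_num, Real.log_pow]; push_cast; ring
    have hmono : Real.log 8 ≤ Real.log ((p : ℝ) - 1) := Real.log_le_log (by norm_num) h8'
    have hfrac : ((p : ℝ) - 2) / p < 1 := by
      rw [div_lt_one (by linarith)]; linarith
    nlinarith

lemma Jf_pos {e x : ℝ} (he : 0 < e) (hx : e < x) : 0 < Jf e x := by
  have h := Jf_strictMonoOn he self_mem_Ici (mem_Ici.mpr hx.le) hx
  rwa [Jf_self] at h

lemma exists_neg {e A c : ℝ} (C : ℝ) (he : 0 < e) (hA : 0 < A) (hc : 0 < c) :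
    ∃ E₁, e < E₁ ∧ C - A * E₁ ^ 2 - c * Jf e E₁ < 0 := by
  obtain ⟨M, hM1, hM2, hM3⟩ : ∃ M, e < M ∧ 1 ≤ M ∧
      (|C - c * Real.log e| + 2 * c + 1) / A ≤ M :=
    ⟨max (e + 1) (max 1 ((|C - c * Real.log e| + 2 * c + 1) / A)),
      lt_of_lt_of_le (by linarith) (le_max_left _ _),
      le_trans (le_max_left _ _) (le_max_right _ _),
      le_trans (le_max_right _ _) (le_max_right _ _)⟩
  refine ⟨M, hM1, ?_⟩
  have hJ : Real.log e - 2 * M ≤ Jf e M := Jf_lower he hM1.le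
  have habs : C - c * Real.log e ≤ |C - c * Real.log e| := le_abs_self _
  have habs0 : 0 ≤ |C - c * Real.log e| := abs_nonneg _
  have hAE : |C - c * Real.log e| + 2 * c + 1 ≤ A * M := by
    rw [div_le_iff₀ hA] at hM3
    linarith
  have hsq : (|C - c * Real.log e| + 2 * c + 1) * M ≤ A * M ^ 2 := by
    nlinarith
  have hm := mul_le_mul_of_nonneg_left hJ hc.le
  nlinarith

lemma unique_root {e A c : ℝ} (C : ℝ) (he : 0 < e) (hA : 0 < A) (hc : 0 < c)
    (hpos : 0 < C - A * e ^ 2) :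
    ∃! E : ℝ, E ∈ Ioi e ∧ C - A * E ^ 2 - c * Jf e E = 0 := by
  obtain ⟨E₁, hE₁e, hFE₁⟩ := exists_neg C he hA hc
  have hFe : (0:ℝ) < C - A * e ^ 2 - c * Jf e e := by
    rw [Jf_self]; simpa using hpos
  have hcont : ContinuousOn (fun E => C - A * E ^ 2 - c * Jf e E) (Ici e) := by
    apply ContinuousOn.sub
    · exact continuousOn_const.sub
        (continuousOn_const.mul (continuous_pow 2).continuousOn)
    · exact continuousOn_const.mul (Jf_contOn he)
  have hmem0 : (0 : ℝ) ∈ Icc (C - A * E₁ ^ 2 - c * Jf e E₁) (C - A * e ^ 2 - c * Jf e e) :=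
    ⟨hFE₁.le, hFe.le⟩
  obtain ⟨E, hEmem, hFE0⟩ :=
    intermediate_value_Icc' hE₁e.le (hcont.mono Icc_subset_Ici_self) hmem0
  have hFE : C - A * E ^ 2 - c * Jf e E = 0 := hFE0
  have hEne : E ≠ e := by
    intro h
    rw [h] at hFE
    linarith
  have hEgt : e < E := lt_of_le_of_ne hEmem.1 (Ne.symm hEne)
  refine ⟨E, ⟨hEgt, hFE⟩, ?_⟩
  rintro y ⟨hy, hy0⟩
  have hy' : e < y := hy
  have := F_strictAntiOn he hA hc C (mem_Ici.mpr hy'.le) (mem_Ici.mpr hEgt.le)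
  exact (F_strictAntiOn he hA hc C).injOn (mem_Ici.mpr hy'.le) (mem_Ici.mpr hEgt.le)
    (hy0.trans hFE.symm)

theorem stmt3 (p : ℕ) (hp : 3 ≤ p) :
    (∀ k : ℕ, ∃! E : ℝ, E ∈ Set.Ioi (Einf p) ∧ ThetaK p k (-E) = 0) ∧
    (∀ Ek : ℕ → ℝ, (∀ k, Ek k ∈ Set.Ioi (Einf p) ∧ ThetaK p k (-(Ek k)) = 0) →
      StrictAnti Ek ∧ Tendsto Ek atTop (nhds (Einf p))) := by
  have hp3 : (3 : ℝ) ≤ (p : ℝ) := by exact_mod_cast hp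
  have hfrac : 0 < ((p : ℝ) - 1) / (p : ℝ) := by
    apply div_pos <;> linarith
  have he : 0 < Einf p := by
    rw [Einf]
    have := Real.sqrt_pos.mpr hfrac
    positivity
  have he2 : (Einf p) ^ 2 = 4 * (((p : ℝ) - 1) / (p : ℝ)) := by
    rw [Einf, mul_pow, Real.sq_sqrt hfrac.le]
    norm_num
  have hp0 : (p : ℝ) ≠ 0 := by linarith
  have hp1 : (p : ℝ) - 1 ≠ 0 := by linarith
  have hApos : 0 < ((p : ℝ) - 2) / (4 * ((p : ℝ) - 1)) := by
    apply div_pos <;> linarith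
  have hAe2 : ((p : ℝ) - 2) / (4 * ((p : ℝ) - 1)) * (Einf p) ^ 2 = ((p : ℝ) - 2) / (p : ℝ) := by
    rw [he2]
    field_simp
  have hpos : 0 < (1 / 2 : ℝ) * Real.log ((p : ℝ) - 1)
      - ((p : ℝ) - 2) / (4 * ((p : ℝ) - 1)) * (Einf p) ^ 2 := by
    rw [hAe2]; exact theta_pos hp
  have htheta : ∀ (k : ℕ) (E : ℝ), Einf p ≤ E →
      ThetaK p k (-E) = (1 / 2 : ℝ) * Real.log ((p : ℝ) - 1)
        - ((p : ℝ) - 2) / (4 * ((p : ℝ) - 1)) * E ^ 2 - ((k : ℝ) + 1) * Jf (Einf p) E := by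
    intro k E hE
    have h1 : -E ≤ -(Einf p) := by linarith
    rw [ThetaK, if_pos h1]
    have h2 : rateI1 p (-E) = Jf (Einf p) E := by
      rw [rateI1, Jf, neg_neg]
      rw [show ((-E) ^ 2 : ℝ) = E ^ 2 by ring]
      ring
    rw [h2]
    ring
  have key : ∀ k : ℕ, ∃! E : ℝ, E ∈ Set.Ioi (Einf p) ∧ ThetaK p k (-E) = 0 := by
    intro k
    have hc : (0 : ℝ) < (k : ℝ) + 1 := by positivity
    obtain ⟨E, ⟨hE1, hE2⟩, hEuniq⟩ := unique_root (c := (k : ℝ) + 1)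
      ((1 / 2 : ℝ) * Real.log ((p : ℝ) - 1)) he hApos hc hpos
    refine ⟨E, ⟨hE1, by rw [htheta k E (le_of_lt hE1)]; exact hE2⟩, ?_⟩
    rintro y ⟨hy1, hy2⟩
    refine hEuniq y ⟨hy1, ?_⟩
    rw [htheta k y (le_of_lt hy1)] at hy2
    exact hy2
  refine ⟨key, ?_⟩
  intro Ek hEk
  have hEk' : ∀ k : ℕ, Einf p < Ek k ∧
      (1 / 2 : ℝ) * Real.log ((p : ℝ) - 1)
        - ((p : ℝ) - 2) / (4 * ((p : ℝ) - 1)) * (Ek k) ^ 2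
        - ((k : ℝ) + 1) * Jf (Einf p) (Ek k) = 0 := by
    intro k
    obtain ⟨h1, h2⟩ := hEk k
    have h1' : Einf p < Ek k := h1
    refine ⟨h1', ?_⟩
    rw [← htheta k _ h1'.le]
    exact h2
  have hanti : StrictAnti Ek := by
    apply strictAnti_nat_of_succ_lt
    intro k
    obtain ⟨h1, h2⟩ := hEk' k
    obtain ⟨h1', h2'⟩ := hEk' (k + 1)
    have hJ : 0 < Jf (Einf p) (Ek k) := Jf_pos he h1
    have hc : (0 : ℝ) < (k : ℝ) + 2 := by positivity
    by_contra hcon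
    push_neg at hcon
    rcases eq_or_lt_of_le hcon with h | h
    · rw [← h] at h2'
      push_cast at h2'
      nlinarith [h2, h2', hJ]
    · have hmono := F_strictAntiOn he hApos hc
        ((1 / 2 : ℝ) * Real.log ((p : ℝ) - 1)) (mem_Ici.mpr h1.le) (mem_Ici.mpr h1'.le) h
      simp only at hmono
      push_cast at h2'
      nlinarith [h2, h2', hJ, hmono]
  have hbdd : BddBelow (Set.range Ek) := ⟨Einf p, by rintro _ ⟨k, rfl⟩; exact (hEk' k).1.le⟩
  have htend := tendsto_atTop_ciInf hanti.antitone hbdd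
  have hLe : Einf p ≤ ⨅ k, Ek k := le_ciInf fun k => (hEk' k).1.le
  have hL : (⨅ k, Ek k) = Einf p := by
    rcases eq_or_lt_of_le hLe with h | h
    · exact h.symm
    · exfalso
      have hJL : 0 < Jf (Einf p) (⨅ k, Ek k) := Jf_pos he h
      obtain ⟨n, hn⟩ :=
        exists_nat_gt ((1 / 2 : ℝ) * Real.log ((p : ℝ) - 1) / Jf (Einf p) (⨅ k, Ek k))
      have hLn : (⨅ k, Ek k) ≤ Ek n := ciInf_le hbdd n
      have hJn : Jf (Einf p) (⨅ k, Ek k) ≤ Jf (Einf p) (Ek n) := by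
        rcases eq_or_lt_of_le hLn with h' | h'
        · rw [h']
        · exact (Jf_strictMonoOn he (mem_Ici.mpr hLe) (mem_Ici.mpr (hEk' n).1.le) h').le
      have h2 := (hEk' n).2
      have hx2 : 0 ≤ ((p : ℝ) - 2) / (4 * ((p : ℝ) - 1)) * (Ek n) ^ 2 := by positivity
      have hle : ((n : ℝ) + 1) * Jf (Einf p) (⨅ k, Ek k)
          ≤ (1 / 2 : ℝ) * Real.log ((p : ℝ) - 1) := by nlinarith [h2, hx2, hJn, hJL]
      have hgt : (1 / 2 : ℝ) * Real.log ((p : ℝ) - 1)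
          < ((n : ℝ) + 1) * Jf (Einf p) (⨅ k, Ek k) := by
        have h' : (1 / 2 : ℝ) * Real.log ((p : ℝ) - 1) / Jf (Einf p) (⨅ k, Ek k)
            < (n : ℝ) + 1 := hn.trans (by linarith)
        calc (1 / 2 : ℝ) * Real.log ((p : ℝ) - 1)
            = (1 / 2 : ℝ) * Real.log ((p : ℝ) - 1) / Jf (Einf p) (⨅ k, Ek k)
              * Jf (Einf p) (⨅ k, Ek k) := (div_mul_cancel₀ _ hJL.ne').symm
          _ < ((n : ℝ) + 1) * Jf (Einf p) (⨅ k, Ek k) := mul_lt_mul_of_pos_right h' hJL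
      linarith
  rw [hL] at htend
  exact ⟨hanti, htend⟩
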